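/- arXiv:1312.4023 — 2 statements merged into one kernel-verified Lean document; each statement's English description precedes it below -/
import Mathlib

section
/- Let M = M₁ ⊕ M₂ be a right R-module which is an internal direct sum of submodules M₁ and M₂, where M₁ and M₂ are both principally δ-lifting. If M is a duo module, then M is principally δ-lifting. -/
/-- A submodule `K` of `M` is *essential* in `M` if it has nonzero intersection with
every nonzero submodule of `M`. -/
def IsEssentialSubmodule {R M : Type*} [Ring R] [AddCommGroup M] [Module R M]
    (K : Submodule R M) : Prop :=
  ∀ N : Submodule R M, N ≠ ⊥ → K ⊓ N ≠ ⊥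

/-- A module `M` is *singular* if the annihilator of every element of `M` is an
essential ideal of `R`. -/
def IsSingularModule (R M : Type*) [Ring R] [AddCommGroup M] [Module R M] : Prop :=
  ∀ x : M, IsEssentialSubmodule (LinearMap.ker (LinearMap.toSpanSingleton R M x))

/-- A submodule `N` of `M` is *δ-small* in `M` if whenever `M = N + X` with `M/X`
singular, we have `X = M`. -/
def IsDeltaSmall (R : Type*) {M : Type*} [Ring R] [AddCommGroup M] [Module R M]
    (N : Submodule R M) : Prop :=
  ∀ X : Submodule R M, N ⊔ X = ⊤ → IsSingularModule R (M ⧸ X) → X = ⊤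

/-- A module `M` is *principally δ-lifting* if for each `m ∈ M` there is a
decomposition `M = A ⊕ B` with `A ≤ mR` and `mR ∩ B` δ-small in `B`. -/
def IsPrinDeltaLifting (R M : Type*) [Ring R] [AddCommGroup M] [Module R M] : Prop :=
  ∀ m : M, ∃ A B : Submodule R M, A ≤ Submodule.span R {m} ∧ IsCompl A B ∧
    IsDeltaSmall R ((Submodule.span R {m} ⊓ B).comap B.subtype)

/-!
Write `m = m₁ + m₂` with `mᵢ ∈ Mᵢ`. The projections onto the summands are endomorphisms of `M`,
so in a duo module `mR = m₁R ⊕ m₂R`. Splitting `Mᵢ = Aᵢ ⊕ Bᵢ` at `mᵢ`, take `A = A₁ ⊕ A₂` and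
`B = B₁ ⊕ B₂`. Since all the pieces sit compatibly inside `M₁ ⊕ M₂`, modularity of the submodule
lattice gives `mR ∩ B = (m₁R ∩ B₁) ⊕ (m₂R ∩ B₂)`, a sum of two submodules that are δ-small in `B`.
-/

open Submodule

namespace Disjoint

variable {α : Type*} [Lattice α] [OrderBot α] [IsModularLattice α] {a b : α}

theorem sup_inf_eq_of_le (hab : Disjoint a b) {c : α} (hc : c ≤ a) : (c ⊔ b) ⊓ a = c := by
  rw [sup_inf_assoc_of_le b hc, hab.symm.eq_bot, sup_bot_eq]

-- `(· ⊔ b) ⊓ a` acts as the projection onto `a` along `b`, and it is monotone.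
theorem le_inf_sup_of_le (hab : Disjoint a b) {u x y : α} (hx : x ≤ a) (hy : y ≤ a)
    (hu : u ≤ a ⊔ b) (hux : u ≤ x ⊔ b) (huy : u ≤ y ⊔ b) : u ≤ x ⊓ y ⊔ b := by
  have hproj : (u ⊔ b) ⊓ a ≤ x ⊓ y := le_inf
    ((inf_le_inf_right a (sup_le hux le_sup_right)).trans (hab.sup_inf_eq_of_le hx).le)
    ((inf_le_inf_right a (sup_le huy le_sup_right)).trans (hab.sup_inf_eq_of_le hy).le)
  calc u ≤ (u ⊔ b) ⊓ (a ⊔ b) := le_inf le_sup_left hu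
    _ = (u ⊔ b) ⊓ a ⊔ b := (inf_sup_assoc_of_le a le_sup_right).symm
    _ ≤ x ⊓ y ⊔ b := sup_le_sup_right hproj b

theorem sup_inf_sup_eq_of_le (hab : Disjoint a b) {x₁ x₂ y₁ y₂ : α} (hx₁ : x₁ ≤ a)
    (hy₁ : y₁ ≤ a) (hx₂ : x₂ ≤ b) (hy₂ : y₂ ≤ b) :
    (x₁ ⊔ x₂) ⊓ (y₁ ⊔ y₂) = x₁ ⊓ y₁ ⊔ x₂ ⊓ y₂ := by
  refine le_antisymm ?_ (sup_le (inf_le_inf le_sup_left le_sup_left)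
    (inf_le_inf le_sup_right le_sup_right))
  have hx : x₁ ⊔ x₂ ≤ a ⊔ b := sup_le_sup hx₁ hx₂
  have h₁ : (x₁ ⊔ x₂) ⊓ (y₁ ⊔ y₂) ≤ x₁ ⊓ y₁ ⊔ b := hab.le_inf_sup_of_le hx₁ hy₁
    (inf_le_left.trans hx) (inf_le_left.trans (sup_le_sup_left hx₂ _))
    (inf_le_right.trans (sup_le_sup_left hy₂ _))
  have h₂ : (x₁ ⊔ x₂) ⊓ (y₁ ⊔ y₂) ≤ x₂ ⊓ y₂ ⊔ a := hab.symm.le_inf_sup_of_le hx₂ hy₂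
    (inf_le_left.trans (hx.trans_eq (sup_comm a b)))
    (inf_le_left.trans (sup_comm x₁ x₂ ▸ sup_le_sup_left hx₁ _))
    (inf_le_right.trans (sup_comm y₁ y₂ ▸ sup_le_sup_left hy₁ _))
  calc (x₁ ⊔ x₂) ⊓ (y₁ ⊔ y₂) ≤ (x₁ ⊓ y₁ ⊔ b) ⊓ (x₂ ⊓ y₂ ⊔ a) := le_inf h₁ h₂
    _ = x₁ ⊓ y₁ ⊔ x₂ ⊓ y₂ := by
      rw [sup_inf_assoc_of_le b ((inf_le_left.trans hx₁).trans le_sup_right), inf_comm b,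
        hab.symm.sup_inf_eq_of_le (inf_le_left.trans hx₂)]

end Disjoint

section Singular

variable {R P Q : Type*} [Ring R] [AddCommGroup P] [Module R P] [AddCommGroup Q] [Module R Q]

theorem IsEssentialSubmodule.mono {K K' : Submodule R P} (hK : IsEssentialSubmodule K)
    (h : K ≤ K') : IsEssentialSubmodule K' := fun N hN hbot =>
  hK N hN (eq_bot_iff.2 ((inf_le_inf_right N h).trans hbot.le))

theorem IsSingularModule.of_injective {f : P →ₗ[R] Q} (hf : Function.Injective f)
    (hQ : IsSingularModule R Q) : IsSingularModule R P := fun x => by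
  simpa only [← LinearMap.comp_toSpanSingleton,
    LinearMap.ker_comp_of_ker_eq_bot _ (LinearMap.ker_eq_bot.2 hf)] using hQ (f x)

theorem IsSingularModule.of_surjective {f : P →ₗ[R] Q} (hf : Function.Surjective f)
    (hP : IsSingularModule R P) : IsSingularModule R Q := fun y => by
  obtain ⟨x, rfl⟩ := hf y
  rw [← LinearMap.comp_toSpanSingleton]
  exact (hP x).mono (LinearMap.ker_le_ker_comp _ _)

end Singular

section DeltaSmall

variable {R M P Q : Type*} [Ring R] [AddCommGroup M] [Module R M]
  [AddCommGroup P] [Module R P] [AddCommGroup Q] [Module R Q]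

theorem IsDeltaSmall.map {N : Submodule R P} (hN : IsDeltaSmall R N) (f : P →ₗ[R] Q) :
    IsDeltaSmall R (N.map f) := by
  intro Y hsup hsing
  have hcomap : N ⊔ Y.comap f = ⊤ := by
    refine eq_top_iff.2 fun x _ => ?_
    have hx : f x ∈ N.map f ⊔ Y := hsup ▸ mem_top
    obtain ⟨_, ⟨n, hn, rfl⟩, y, hy, hxy⟩ := mem_sup.1 hx
    refine mem_sup.2 ⟨n, hn, x - n, ?_, add_sub_cancel n x⟩
    rwa [mem_comap, map_sub, ← hxy, add_sub_cancel_left]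
  have hinj : Function.Injective (mapQ (Y.comap f) Y f le_rfl) := by
    rw [← LinearMap.ker_eq_bot, ker_mapQ, mkQ_map_self]
  have hY : Y.comap f = ⊤ := hN _ hcomap (hsing.of_injective hinj)
  rw [← hsup, sup_eq_right.2 (map_le_iff_le_comap.2 (le_top.trans_eq hY.symm))]

theorem IsDeltaSmall.sup {N₁ N₂ : Submodule R M} (h₁ : IsDeltaSmall R N₁)
    (h₂ : IsDeltaSmall R N₂) : IsDeltaSmall R (N₁ ⊔ N₂) := by
  intro Y hsup hsing
  have hN₂Y : N₂ ⊔ Y = ⊤ := h₁ (N₂ ⊔ Y) (by rwa [← sup_assoc])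
    (hsing.of_surjective (factor_surjective le_sup_right))
  exact h₂ Y hN₂Y hsing

theorem IsDeltaSmall.comap_subtype_map (f : P →ₗ[R] Q) {K S : Submodule R P}
    {L : Submodule R Q} (hSK : S ≤ K) (hKL : K.map f ≤ L) (h : IsDeltaSmall R (S.comap K.subtype)) :
    IsDeltaSmall R ((S.map f).comap L.subtype) := by
  have hf : ∀ x ∈ K, f x ∈ L := fun x hx => hKL (mem_map_of_mem hx)
  have hmap : (S.comap K.subtype).map (f.restrict hf) = (S.map f).comap L.subtype := by
    rw [LinearMap.map_restrict, map_comap_subtype, inf_of_le_right hSK]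
  exact hmap ▸ h.map _

theorem IsDeltaSmall.comap_subtype_of_le {K L S : Submodule R M} (hSK : S ≤ K) (hKL : K ≤ L)
    (h : IsDeltaSmall R (S.comap K.subtype)) : IsDeltaSmall R (S.comap L.subtype) := by
  simpa using h.comap_subtype_map LinearMap.id hSK (by simpa using hKL)

theorem Submodule.comap_subtype_sup_of_le {B N₁ N₂ : Submodule R M} (h₁ : N₁ ≤ B) (h₂ : N₂ ≤ B) :
    (N₁ ⊔ N₂).comap B.subtype = N₁.comap B.subtype ⊔ N₂.comap B.subtype :=
  map_injective_of_injective B.injective_subtype <| by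
    rw [map_sup, map_comap_subtype, map_comap_subtype, map_comap_subtype, inf_of_le_right h₁,
      inf_of_le_right h₂, inf_of_le_right (sup_le h₁ h₂)]

end DeltaSmall

section Decomposition

variable {R M : Type*} [Ring R] [AddCommGroup M] [Module R M]

/-- `N = A ⊕ B` is a decomposition as in the definition of principal δ-lifting of `N` at `m`,
with `N`, `A`, `B` all submodules of the ambient module `M`. -/
structure IsPrinDeltaDecomposition (m : M) (N A B : Submodule R M) : Prop where
  mem : m ∈ N
  le_span : A ≤ span R {m}
  disjoint : Disjoint A B
  sup_eq : A ⊔ B = N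
  isDeltaSmall : IsDeltaSmall R ((span R {m} ⊓ B).comap B.subtype)

namespace IsPrinDeltaDecomposition

variable {m : M} {N A B : Submodule R M}

theorem span_le (h : IsPrinDeltaDecomposition m N A B) : span R {m} ≤ N :=
  (span_singleton_le_iff_mem m N).2 h.mem

theorem left_le (h : IsPrinDeltaDecomposition m N A B) : A ≤ N :=
  h.sup_eq ▸ le_sup_left

theorem right_le (h : IsPrinDeltaDecomposition m N A B) : B ≤ N :=
  h.sup_eq ▸ le_sup_right

theorem sup {m₁ m₂ : M} {N₁ N₂ A₁ A₂ B₁ B₂ : Submodule R M}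
    (h₁ : IsPrinDeltaDecomposition m₁ N₁ A₁ B₁) (h₂ : IsPrinDeltaDecomposition m₂ N₂ A₂ B₂)
    (hN : Disjoint N₁ N₂) (hm : span R {m} = span R {m₁} ⊔ span R {m₂}) :
    IsPrinDeltaDecomposition m (N₁ ⊔ N₂) (A₁ ⊔ A₂) (B₁ ⊔ B₂) where
  mem := sup_le_sup h₁.span_le h₂.span_le (hm ▸ mem_span_singleton_self m)
  le_span := hm ▸ sup_le_sup h₁.le_span h₂.le_span
  disjoint := disjoint_iff.2 <| by
    rw [hN.sup_inf_sup_eq_of_le h₁.left_le h₁.right_le h₂.left_le h₂.right_le,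
      h₁.disjoint.eq_bot, h₂.disjoint.eq_bot, sup_bot_eq]
  sup_eq := by rw [sup_sup_sup_comm, h₁.sup_eq, h₂.sup_eq]
  isDeltaSmall := by
    have hinf : span R {m} ⊓ (B₁ ⊔ B₂) = span R {m₁} ⊓ B₁ ⊔ span R {m₂} ⊓ B₂ := by
      rw [hm]
      exact hN.sup_inf_sup_eq_of_le h₁.span_le h₁.right_le h₂.span_le h₂.right_le
    rw [hinf, comap_subtype_sup_of_le (inf_le_right.trans le_sup_left)
      (inf_le_right.trans le_sup_right)]
    exact (h₁.isDeltaSmall.comap_subtype_of_le inf_le_right le_sup_left).sup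
      (h₂.isDeltaSmall.comap_subtype_of_le inf_le_right le_sup_right)

end IsPrinDeltaDecomposition

theorem IsPrinDeltaLifting.exists_isPrinDeltaDecomposition {N : Submodule R M}
    (h : IsPrinDeltaLifting R N) {m : M} (hm : m ∈ N) :
    ∃ A B : Submodule R M, IsPrinDeltaDecomposition m N A B := by
  obtain ⟨A, B, hA, hAB, hδ⟩ := h ⟨m, hm⟩
  have hspan : (span R {(⟨m, hm⟩ : N)}).map N.subtype = span R {m} := by
    rw [map_span, Set.image_singleton, subtype_apply]
  refine ⟨A.map N.subtype, B.map N.subtype,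
    ⟨hm, hspan ▸ map_mono hA, disjoint_map N.injective_subtype hAB.disjoint, ?_, ?_⟩⟩
  · rw [← Submodule.map_sup, hAB.sup_eq_top, Submodule.map_top, range_subtype]
  · rw [← hspan, ← map_inf _ N.injective_subtype]
    exact hδ.comap_subtype_map N.subtype inf_le_right le_rfl

theorem Submodule.span_singleton_eq_sup_projection {M₁ M₂ : Submodule R M} (h : IsCompl M₁ M₂)
    {m : M} (hm : ∀ f : M →ₗ[R] M, (span R {m}).map f ≤ span R {m}) :
    span R {m} = span R {M₁.projection M₂ h m} ⊔ span R {M₂.projection M₁ h.symm m} := by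
  refine le_antisymm ((span_singleton_le_iff_mem _ _).2 ?_) (sup_le ?_ ?_)
  · have hsum := add_mem_sup (mem_span_singleton_self (R := R) (M₁.projection M₂ h m))
      (mem_span_singleton_self (R := R) (M₂.projection M₁ h.symm m))
    rwa [projection_add_projection_eq_self] at hsum
  all_goals
    exact (span_singleton_le_iff_mem _ _).2 (hm _ (mem_map_of_mem (mem_span_singleton_self m)))

end Decomposition

theorem isPrinDeltaLifting_of_duo_directSum
    {R M : Type*} [Ring R] [AddCommGroup M] [Module R M]
    (M₁ M₂ : Submodule R M) (hcompl : IsCompl M₁ M₂)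
    (h₁ : IsPrinDeltaLifting R M₁) (h₂ : IsPrinDeltaLifting R M₂)
    (hduo : ∀ (N : Submodule R M) (f : M →ₗ[R] M), N.map f ≤ N) :
    IsPrinDeltaLifting R M := by
  intro m
  obtain ⟨A₁, B₁, hd₁⟩ := h₁.exists_isPrinDeltaDecomposition (projection_apply_mem hcompl m)
  obtain ⟨A₂, B₂, hd₂⟩ := h₂.exists_isPrinDeltaDecomposition (projection_apply_mem hcompl.symm m)
  have hd := hd₁.sup hd₂ hcompl.disjoint (span_singleton_eq_sup_projection hcompl (hduo _))
  rw [hcompl.sup_eq_top] at hd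
  exact ⟨_, _, hd.le_span, ⟨hd.disjoint, codisjoint_iff.2 hd.sup_eq⟩, hd.isDeltaSmall⟩
end

section
/- Let R be a ring. The right R-module R is principally δ-semiperfect (equivalently, R/aR has a projective δ-cover for every a ∈ R) if and only if R is principally δ-lifting as a right R-module. -/
universe uR uX uP

/-- A *projective δ-cover* of a module `X`: a projective module `P` together with a
surjective homomorphism `f : P → X` whose kernel is δ-small in `P`. -/
structure ProjectiveDeltaCover (R : Type uR) (X : Type uX) [Ring R]
    [AddCommGroup X] [Module R X] : Type (max uR uX (uP + 1)) where
  P : Type uP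
  [addCommGroup : AddCommGroup P]
  [module : Module R P]
  projective : Module.Projective R P
  f : P →ₗ[R] X
  surjective : Function.Surjective f
  ker_deltaSmall : IsDeltaSmall R (LinearMap.ker f)

/-- A module `M` is *principally δ-semiperfect* if for each `m ∈ M` the factor module
`M/mR` has a projective δ-cover. -/
def IsPrinDeltaSemiperfect (R : Type uR) (M : Type uX) [Ring R] [AddCommGroup M]
    [Module R M] : Prop :=
  ∀ m : M, Nonempty (ProjectiveDeltaCover.{uR, uX, uP} R (M ⧸ Submodule.span R {m}))

/-!
Both directions work for any projective module `M`. If `M = A ⊕ B` with `A ≤ mR` and `mR ∩ B`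
δ-small in `B`, then `B → M/mR` is a projective δ-cover. Conversely, lift `M → M/mR` through a
projective δ-cover `f : P → M/mR` to `h : M → P`, so that `P = h(M) + ker f`. By Zhou's lemma
(if `N` is δ-small and `X + N = P`, then `P = X ⊕ Y` for any `Y ≤ N` maximal with `X ∩ Y = 0`,
since `P/(X ⊕ Y)` is singular) `h(M)` is a summand of `P`, hence projective. So `h : M → h(M)`
splits by some `s`, and `M = ker h ⊕ s(h(M))` where `ker h ≤ mR` and `mR ∩ s(h(M))` is an
image of `ker f`.
-/

open LinearMap Submodule

theorem exists_maximal_le_disjoint {α : Type*} [CompleteLattice α] [IsCompactlyGenerated α]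
    (a b : α) : ∃ c, Maximal (fun c => c ≤ b ∧ Disjoint a c) c := by
  obtain ⟨c, -, hc⟩ := zorn_le_nonempty₀ {c | c ≤ b ∧ Disjoint a c}
    (fun s hs hchain _ _ => ⟨sSup s, ⟨sSup_le fun c hc => (hs hc).1,
      (hchain.directedOn.disjoint_sSup_right).2 fun c hc => (hs hc).2⟩,
      fun _ => le_sSup⟩) ⊥ ⟨bot_le, disjoint_bot_right⟩
  exact ⟨c, hc⟩

section

variable {R M M' : Type*} [Ring R] [AddCommGroup M] [Module R M] [AddCommGroup M'] [Module R M']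

theorem LinearMap.isCompl_ker_range_of_comp_eq_id {g : M →ₗ[R] M'} {s : M' →ₗ[R] M}
    (hgs : g ∘ₗ s = LinearMap.id) : IsCompl (ker g) (range s) := by
  have hgs' (y : M') : g (s y) = y := LinearMap.congr_fun hgs y
  constructor
  · rw [disjoint_iff_inf_le]
    rintro _ ⟨hx, y, rfl⟩
    rw [SetLike.mem_coe, mem_ker, hgs'] at hx
    simp [hx]
  · rw [codisjoint_iff_le_sup]
    intro x _
    refine mem_sup.2 ⟨x - s (g x), ?_, s (g x), ⟨g x, rfl⟩, sub_add_cancel x _⟩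
    rw [mem_ker, map_sub, hgs', sub_self]

theorem Module.Projective.of_isCompl [Module.Projective R M] {A B : Submodule R M}
    (h : IsCompl A B) : Module.Projective R A :=
  .of_split A.subtype (A.projectionOnto B h) (A.projectionOnto_comp_subtype h)

theorem IsSingularModule.of_injective_s17 {g : M →ₗ[R] M'} (hg : Function.Injective g)
    (hs : IsSingularModule R M') : IsSingularModule R M := by
  intro x
  have := hs (g x)
  rwa [← comp_toSpanSingleton, ker_comp_of_ker_eq_bot _ (ker_eq_bot.2 hg)] at this

-- `hN` says that `N ⊓ W` is essential in `N`.
theorem isSingularModule_quotient_of_sup_eq_top {N W : Submodule R M} (hsup : N ⊔ W = ⊤)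
    (hN : ∀ U ≤ N, Disjoint U W → U = ⊥) : IsSingularModule R (M ⧸ W) := by
  intro z
  obtain ⟨x, rfl⟩ := W.mkQ_surjective z
  obtain ⟨n, hn, w, hw, rfl⟩ := mem_sup.1 (hsup ▸ mem_top : x ∈ N ⊔ W)
  have hann (r : R) : r ∈ ker (toSpanSingleton R _ (W.mkQ (n + w))) ↔ r • n ∈ W := by
    rw [mem_ker, toSpanSingleton_apply, ← map_smul, mkQ_apply, Quotient.mk_eq_zero, smul_add,
      add_mem_cancel_right (W.smul_mem r hw)]
  intro J hJ hdisj
  have hJn : Disjoint (J.map (toSpanSingleton R M n)) W := by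
    rw [disjoint_def]
    rintro _ ⟨j, hj, rfl⟩ hjW
    have : j ∈ ker (toSpanSingleton R _ (W.mkQ (n + w))) ⊓ J := ⟨(hann j).2 hjW, hj⟩
    rw [hdisj, mem_bot] at this
    simp [this]
  have hJ_le : J ≤ ker (toSpanSingleton R _ (W.mkQ (n + w))) := by
    intro j hj
    have : j • n ∈ J.map (toSpanSingleton R M n) := ⟨j, hj, rfl⟩
    rw [hN _ (by rintro _ ⟨r, -, rfl⟩; exact N.smul_mem r hn) hJn, mem_bot] at this
    exact (hann j).2 (this ▸ W.zero_mem)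
  exact hJ (inf_eq_right.2 hJ_le ▸ hdisj)

theorem IsDeltaSmall.mono {K K' : Submodule R M} (h : IsDeltaSmall R K) (hle : K' ≤ K) :
    IsDeltaSmall R K' :=
  fun X hsup hsing => h X (top_le_iff.1 (hsup ▸ sup_le_sup_right hle X)) hsing

theorem IsDeltaSmall.map_of_surjective {K : Submodule R M} (hK : IsDeltaSmall R K)
    {f : M →ₗ[R] M'} (hf : Function.Surjective f) : IsDeltaSmall R (K.map f) := by
  intro X hsup hsing
  have hsup' : K ⊔ X.comap f = ⊤ := by
    rw [← sup_eq_left.2 (ker_le_comap (f := f) (p := X)), ← sup_assoc, ← comap_map_eq,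
      Submodule.map_sup, map_comap_eq_of_surjective hf, hsup, comap_top]
  have hsing' : IsSingularModule R (M ⧸ X.comap f) := by
    refine hsing.of_injective_s17 (g := (X.comap f).mapQ X f le_rfl) (ker_eq_bot.1 ?_)
    rw [ker_mapQ, mkQ_map_self]
  rw [← map_comap_eq_of_surjective hf X, hK _ hsup' hsing', Submodule.map_top,
    range_eq_top.2 hf]

theorem IsDeltaSmall.exists_isCompl_le {N X : Submodule R M} (hN : IsDeltaSmall R N)
    (hsup : X ⊔ N = ⊤) : ∃ Y ≤ N, IsCompl X Y := by
  obtain ⟨Y, ⟨hYN, hXY⟩, hmax⟩ := exists_maximal_le_disjoint X N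
  have hess : ∀ U ≤ N, Disjoint U (X ⊔ Y) → U = ⊥ := by
    intro U hUN hU
    have hUY : U ≤ Y := le_sup_right.trans <|
      hmax ⟨sup_le hYN hUN, hXY.disjoint_sup_right_of_disjoint_sup_left hU.symm⟩ le_sup_left
    exact hU.eq_bot_of_le (hUY.trans le_sup_right)
  have hsup' : N ⊔ (X ⊔ Y) = ⊤ :=
    top_le_iff.1 (hsup ▸ sup_le (le_sup_left.trans le_sup_right) le_sup_left)
  have hsing := isSingularModule_quotient_of_sup_eq_top hsup' hess
  exact ⟨Y, hYN, hXY, codisjoint_iff.2 (hN _ hsup' hsing)⟩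

end

section

variable {R : Type uR} {M : Type uX} [Ring R] [AddCommGroup M] [Module R M]
  [Module.Projective R M]

theorem IsPrinDeltaLifting.isPrinDeltaSemiperfect (hM : IsPrinDeltaLifting R M) :
    IsPrinDeltaSemiperfect.{uR, uX, uX} R M := by
  intro m
  obtain ⟨A, B, hA, hAB, hδ⟩ := hM m
  have hker : ker ((span R {m}).mkQ ∘ₗ B.subtype) = (span R {m} ⊓ B).comap B.subtype := by
    rw [ker_comp, ker_mkQ, comap_inf, comap_subtype_self, inf_top_eq]
  have hsurj : Function.Surjective ((span R {m}).mkQ ∘ₗ B.subtype) := by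
    rw [← range_eq_top, range_comp, range_subtype, map_mkQ_eq_top, eq_top_iff,
      ← hAB.sup_eq_top]
    exact sup_le_sup_right hA B
  exact ⟨{ P := B
           projective := .of_isCompl hAB.symm
           f := (span R {m}).mkQ ∘ₗ B.subtype
           surjective := hsurj
           ker_deltaSmall := hker ▸ hδ }⟩

theorem IsPrinDeltaSemiperfect.isPrinDeltaLifting
    (hM : IsPrinDeltaSemiperfect.{uR, uX, uP} R M) : IsPrinDeltaLifting R M := by
  intro m
  obtain ⟨⟨P, _, f, hf, hδ⟩⟩ := hM m
  obtain ⟨h, hfh⟩ := Module.projective_lifting_property f (span R {m}).mkQ hf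
  have hsup : range h ⊔ ker f = ⊤ := by
    rw [← comap_map_eq, ← range_comp, hfh, range_mkQ, comap_top]
  obtain ⟨Y, -, hhY⟩ := hδ.exists_isCompl_le hsup
  have := Module.Projective.of_isCompl hhY
  obtain ⟨s, hs⟩ := Module.projective_lifting_property h.rangeRestrict LinearMap.id
    h.surjective_rangeRestrict
  have hhs (z : range h) : h (s z) = z := congrArg Subtype.val (LinearMap.congr_fun hs z)
  refine ⟨ker h, range s, ?_, ker_rangeRestrict h ▸ isCompl_ker_range_of_comp_eq_id hs, ?_⟩
  · exact (ker_le_ker_comp h f).trans (by rw [hfh, ker_mkQ])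
  -- `mR ∩ s(h(M))` lies in the image of `ker f` under `P → h(M) → s(h(M))`.
  refine (hδ.map_of_surjective (f := s.rangeRestrict ∘ₗ (range h).projectionOnto Y hhY)
    (s.surjective_rangeRestrict.comp (projectionOnto_surjective hhY))).mono ?_
  rintro ⟨_, z, rfl⟩ hz
  refine ⟨z, ?_, ?_⟩
  · rw [SetLike.mem_coe, mem_ker, ← hhs, ← comp_apply, hfh, mkQ_apply, Quotient.mk_eq_zero]
    exact hz.1
  · ext
    simp [projectionOnto_apply_left]

end

theorem ring_isPrinDeltaSemiperfect_iff_isPrinDeltaLifting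
    (R : Type uR) [Ring R] :
    IsPrinDeltaSemiperfect.{uR, uR, uR} R R ↔ IsPrinDeltaLifting R R :=
  ⟨IsPrinDeltaSemiperfect.isPrinDeltaLifting, IsPrinDeltaLifting.isPrinDeltaSemiperfect⟩
end
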